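/- For every graph G, pdim(G) ≤ eq(Ḡ) + 1, where eq(Ḡ) is the equivalence number of the complement of G. -/

import Mathlib

/-!
Take a cover of `Gᶜ` by `eq(Gᶜ)` equivalence subgraphs. Each of them, with every missing vertex
added as a singleton clique, is an equivalence relation on `V`; coordinate `i` of a vertex is the
label of its class in the `i`-th relation, and one last coordinate labels the vertices injectively.
Two distinct vertices agree in some coordinate exactly when some cover member joins them, i.e.
exactly when they are adjacent in `Gᶜ`.
-/

/-- `φ : V → Fin l → ℕ` is an `l`-encoding of `G`. -/
def IsEncoding {V : Type*} (G : SimpleGraph V) (l : ℕ) (φ : V → Fin l → ℕ) : Prop :=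
  Function.Injective φ ∧ ∀ u v : V, u ≠ v → (G.Adj u v ↔ ∀ i, φ u i ≠ φ v i)

/-- The product dimension of a graph. -/
noncomputable def pdim {V : Type*} (G : SimpleGraph V) : ℕ :=
  sInf {l | ∃ φ : V → Fin l → ℕ, IsEncoding G l φ}

/-- An equivalence graph: a vertex-disjoint union of cliques, i.e. a graph whose
adjacency relation together with equality is transitive. -/
def IsEquivalenceGraph {V : Type*} (K : SimpleGraph V) : Prop :=
  ∀ a b c : V, K.Adj a b → K.Adj b c → a ≠ c → K.Adj a c

/-- The equivalence number of `H`: the minimum number of equivalence subgraphs of `H`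
needed to cover all edges of `H`. -/
noncomputable def eqNum {V : Type*} (H : SimpleGraph V) : ℕ :=
  sInf {m | ∃ K : Fin m → SimpleGraph V,
    (∀ i, K i ≤ H ∧ IsEquivalenceGraph (K i)) ∧
    ∀ u v : V, H.Adj u v → ∃ i, (K i).Adj u v}

/-- `eqNum H` is the least `m` admitting such a cover indexed by `Fin m`. -/
def IsEquivalenceCover {V ι : Type*} (H : SimpleGraph V) (K : ι → SimpleGraph V) : Prop :=
  (∀ i, K i ≤ H ∧ IsEquivalenceGraph (K i)) ∧ ∀ u v : V, H.Adj u v → ∃ i, (K i).Adj u v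

open SimpleGraph

section

variable {V : Type*}

lemma pdim_le_of_isEncoding {G : SimpleGraph V} {l : ℕ} {φ : V → Fin l → ℕ}
    (hφ : IsEncoding G l φ) : pdim G ≤ l :=
  Nat.sInf_le ⟨φ, hφ⟩

lemma isEncoding_snoc {G : SimpleGraph V} {l : ℕ} {ψ : V → Fin l → ℕ} {f : V → ℕ}
    (hψ : ∀ u v, u ≠ v → (G.Adj u v ↔ ∀ i, ψ u i ≠ ψ v i)) (hf : Function.Injective f) :
    IsEncoding G (l + 1) (fun v => Fin.snoc (ψ v) (f v)) := by
  refine ⟨fun u v huv => hf (by simpa using congrFun huv (Fin.last l)), fun u v huv => ?_⟩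
  simp only [Fin.forall_fin_succ', Fin.snoc_castSucc, Fin.snoc_last, hψ u v huv, hf.ne huv,
    ne_eq, not_false_eq_true, and_true]

namespace IsEquivalenceGraph

variable {K : SimpleGraph V}

def setoid (hK : IsEquivalenceGraph K) : Setoid V where
  r u v := u = v ∨ K.Adj u v
  iseqv := by
    refine ⟨fun _ => Or.inl rfl, fun h => h.imp Eq.symm Adj.symm, ?_⟩
    rintro a b c (rfl | hab) (rfl | hbc)
    · exact Or.inl rfl
    · exact Or.inr hbc
    · exact Or.inr hab
    · by_cases hac : a = c
      · exact Or.inl hac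
      · exact Or.inr (hK a b c hab hbc hac)

lemma exists_label [Countable V] (hK : IsEquivalenceGraph K) :
    ∃ c : V → ℕ, ∀ u v, c u = c v ↔ u = v ∨ K.Adj u v := by
  obtain ⟨g, hg⟩ := Countable.exists_injective_nat (Quotient hK.setoid)
  exact ⟨fun v => g ⟦v⟧, fun u v => hg.eq_iff.trans Quotient.eq⟩

lemma of_le_edge {a b : V} (hK : K ≤ edge a b) : IsEquivalenceGraph K := by
  intro x y z hxy hyz hxz
  have := hK hxy
  have := hK hyz
  grind

end IsEquivalenceGraph

namespace IsEquivalenceCover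

variable {ι : Type*} {H : SimpleGraph V} {K : ι → SimpleGraph V}

lemma adj_iff (hK : IsEquivalenceCover H K) {u v : V} : H.Adj u v ↔ ∃ i, (K i).Adj u v :=
  ⟨hK.2 u v, fun ⟨i, hi⟩ => (hK.1 i).1 hi⟩

lemma exists_isEncoding_succ [Countable V] {G : SimpleGraph V} {m : ℕ}
    {K : Fin m → SimpleGraph V} (hK : IsEquivalenceCover Gᶜ K) :
    ∃ φ : V → Fin (m + 1) → ℕ, IsEncoding G (m + 1) φ := by
  choose c hc using fun i => (hK.1 i).2.exists_label
  obtain ⟨f, hf⟩ := Countable.exists_injective_nat V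
  refine ⟨_, isEncoding_snoc (ψ := fun v i => c i v) (fun u v huv => ?_) hf⟩
  have hcompl : ¬G.Adj u v ↔ Gᶜ.Adj u v := by simp [huv]
  simp only [ne_eq, hc, huv, false_or, ← not_exists, ← hK.adj_iff, ← hcompl, not_not]

end IsEquivalenceCover

lemma exists_isEquivalenceCover [Finite V] (H : SimpleGraph V) :
    ∃ m, ∃ K : Fin m → SimpleGraph V, IsEquivalenceCover H K := by
  have := Fintype.ofFinite V
  let e := Fintype.equivFin (V × V)
  refine ⟨_, fun i => H ⊓ edge (e.symm i).1 (e.symm i).2,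
    fun i => ⟨inf_le_left, .of_le_edge inf_le_right⟩, fun u v huv => ⟨e (u, v), ?_⟩⟩
  simp [huv, edge_adj, huv.ne]

lemma exists_isEquivalenceCover_eqNum [Finite V] (H : SimpleGraph V) :
    ∃ K : Fin (eqNum H) → SimpleGraph V, IsEquivalenceCover H K :=
  Nat.sInf_mem (exists_isEquivalenceCover H)

end

/-- For every graph `G`, `pdim(G) ≤ eq(Ḡ) + 1`. -/
theorem pdim_le_eqNum_compl {V : Type*} [Fintype V] (G : SimpleGraph V) :
    pdim G ≤ eqNum Gᶜ + 1 := by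
  obtain ⟨K, hK⟩ := exists_isEquivalenceCover_eqNum Gᶜ
  obtain ⟨φ, hφ⟩ := hK.exists_isEncoding_succ
  exact pdim_le_of_isEncoding hφ
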